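/- arXiv:1307.6692 — 4 statements merged into one kernel-verified Lean document; each statement's English description precedes it below -/
import Mathlib

section
/- The matrix p is irreducible if and only if the restriction of p̃ to the set of arcs E = {(i,j) : p_{ij} > 0} is irreducible. -/
/-!
A path of length `m + 1` from the arc `(i, j)` to the arc `(k, l)` in the line graph of `p` is
a path of length `m` from `j` to `k` in the graph of `p` followed by the arc `(k, l)`, so
`(p̃ ^ (m + 1)) (i, j) (k, l) = (p ^ m) j k * p k l`, even after restricting `p̃` to `E`.
Every row of a stochastic matrix has a positive entry, so every vertex is the tail of an arc
of `E`, and positivity of the powers transfers in both directions.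
-/

theorem Fintype.sum_eq_sum_subtype_of_support {ι M : Type*} [Fintype ι] [AddCommMonoid M]
    {S : ι → Prop} [Fintype {x // S x}] (f : ι → M) (hf : ∀ x, f x ≠ 0 → S x) :
    ∑ x, f x = ∑ x : {x // S x}, f x := by
  classical
  rw [← Finset.sum_subtype (Finset.univ.filter S) (by simp),
    Finset.sum_filter_of_ne fun x _ => hf x]

namespace Matrix

variable {n R : Type*}

/-- The matrix `p̃` of the line graph of `p`, indexed by pairs of vertices. -/
def arcMatrix [DecidableEq n] [Zero R] (p : Matrix n n R) : Matrix (n × n) (n × n) R :=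
  fun a b => if b.1 = a.2 then p a.2 b.2 else 0

theorem arcMatrix_nonneg [DecidableEq n] [Zero R] [Preorder R] {p : Matrix n n R}
    (hp : ∀ i j, 0 ≤ p i j) (a b : n × n) : 0 ≤ p.arcMatrix a b := by
  unfold arcMatrix
  split_ifs
  exacts [hp _ _, le_rfl]

section Semiring

variable [Fintype n] [DecidableEq n] [Semiring R] {p : Matrix n n R}
  {S : n × n → Prop} [Fintype {e // S e}] [DecidableEq {e // S e}]

theorem arcMatrix_submatrix_pow_succ_apply (hS : ∀ i j, p i j ≠ 0 → S (i, j)) (m : ℕ)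
    (a b : {e // S e}) :
    (p.arcMatrix.submatrix (↑) (↑) ^ (m + 1)) a b = (p ^ m) a.1.2 b.1.1 * p b.1.1 b.1.2 := by
  induction m generalizing b with
  | zero => by_cases h : b.1.1 = a.1.2 <;> simp [arcMatrix, h, eq_comm]
  | succ m ih =>
    calc (p.arcMatrix.submatrix (↑) (↑) ^ (m + 2)) a b
        = ∑ e : n × n,
            (p ^ m) a.1.2 e.1 * p e.1 e.2 * (if b.1.1 = e.2 then p e.2 b.1.2 else 0) := by
          rw [pow_succ, mul_apply]
          simp only [ih, submatrix_apply, arcMatrix]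
          symm
          apply Fintype.sum_eq_sum_subtype_of_support
          rintro ⟨i, j⟩ he
          exact hS i j fun h => he (by simp [h])
      _ = ∑ k, (p ^ m) a.1.2 k * p k b.1.1 * p b.1.1 b.1.2 := by
          simp [Fintype.sum_prod_type, mul_ite, eq_comm]
      _ = (p ^ (m + 1)) a.1.2 b.1.1 * p b.1.1 b.1.2 := by
          rw [← Finset.sum_mul, pow_succ, mul_apply]

end Semiring

section Ordered

variable [Fintype n] [DecidableEq n] [Ring R] [LinearOrder R] [IsStrictOrderedRing R]
  {p : Matrix n n R}

theorem pow_succ_apply_pos_of_pos (hp : ∀ i j, 0 ≤ p i j) {m : ℕ} {i j k : n}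
    (hik : 0 < p i k) (hkj : 0 < (p ^ m) k j) : 0 < (p ^ (m + 1)) i j := by
  rw [pow_succ', mul_apply]
  exact Finset.sum_pos' (fun l _ => mul_nonneg (hp i l) (pow_apply_nonneg hp m l j))
    ⟨k, Finset.mem_univ _, mul_pos hik hkj⟩

variable [Fintype {e : n × n // 0 < p e.1 e.2}] [DecidableEq {e : n × n // 0 < p e.1 e.2}]

theorem isIrreducible_arcMatrix_submatrix_iff (hp : ∀ i j, 0 ≤ p i j)
    (hrow : ∀ i, ∃ j, 0 < p i j) :
    (p.arcMatrix.submatrix ((↑) : {e : n × n // 0 < p e.1 e.2} → n × n) (↑)).IsIrreducible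
      ↔ p.IsIrreducible := by
  have hS (i j : n) (h : p i j ≠ 0) : 0 < p i j := (hp i j).lt_of_ne' h
  have hq (a b : {e : n × n // 0 < p e.1 e.2}) :
      0 ≤ p.arcMatrix.submatrix Subtype.val Subtype.val a b :=
    arcMatrix_nonneg hp a.1 b.1
  rw [isIrreducible_iff_exists_pow_pos hp, isIrreducible_iff_exists_pow_pos hq]
  constructor
  · intro H i j
    obtain ⟨k, hik⟩ := hrow i
    obtain ⟨l, hjl⟩ := hrow j
    obtain ⟨_ | m, hm, hpos⟩ := H ⟨(i, k), hik⟩ ⟨(j, l), hjl⟩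
    · omega
    rw [arcMatrix_submatrix_pow_succ_apply hS] at hpos
    refine ⟨m + 1, m.succ_pos, pow_succ_apply_pos_of_pos hp hik ?_⟩
    exact pos_of_mul_pos_left hpos hjl.le
  · intro H a b
    obtain ⟨m, -, hpos⟩ := H a.1.2 b.1.1
    refine ⟨m + 1, m.succ_pos, ?_⟩
    rw [arcMatrix_submatrix_pow_succ_apply hS]
    exact mul_pos hpos b.2

end Ordered

end Matrix

open Matrix in
/-- `p` is irreducible if and only if the restriction of `p̃` to the set of arcs
`E = {(i,j) : p i j > 0}` is irreducible, where a nonnegative square matrix `M` is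
irreducible if for all indices `i, j` there exists `m ≥ 1` with `(M ^ m) i j > 0`. -/
theorem stmt_4 (n : ℕ)
    (p : Matrix (Fin n) (Fin n) ℝ)
    (hpnn : ∀ i j, 0 ≤ p i j) (hprow : ∀ i, ∑ j, p i j = 1)
    (pt : Matrix (Fin n × Fin n) (Fin n × Fin n) ℝ)
    (hpt : ∀ i j k l, pt (i, j) (k, l) = if k = j then p j l else 0)
    (q : Matrix {e : Fin n × Fin n // 0 < p e.1 e.2}
                {e : Fin n × Fin n // 0 < p e.1 e.2} ℝ)
    (hq : ∀ a b, q a b = pt a.val b.val) :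
    (∀ i j : Fin n, ∃ m : ℕ, 1 ≤ m ∧ 0 < (p ^ m) i j) ↔
      (∀ a b : {e : Fin n × Fin n // 0 < p e.1 e.2},
        ∃ m : ℕ, 1 ≤ m ∧ 0 < (q ^ m) a b) := by
  have hpt' : pt = p.arcMatrix := by
    ext ⟨i, j⟩ ⟨k, l⟩
    exact hpt i j k l
  obtain rfl : q = p.arcMatrix.submatrix Subtype.val Subtype.val := by
    ext a b
    rw [hq, hpt', submatrix_apply]
  have hrow (i : Fin n) : ∃ j, 0 < p i j := by
    obtain ⟨j, -, hj⟩ := Finset.exists_ne_zero_of_sum_ne_zero (hprow i ▸ one_ne_zero)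
    exact ⟨j, (hpnn i j).lt_of_ne' hj⟩
  exact (isIrreducible_iff_exists_pow_pos hpnn).symm.trans <|
    (isIrreducible_arcMatrix_submatrix_iff hpnn hrow).symm.trans <|
      isIrreducible_iff_exists_pow_pos fun a b => arcMatrix_nonneg hpnn a.1 b.1
end

section
/- Let A : ℝ → M_n(ℝ) be a family of matrices, λ : ℝ → ℝ, and w : ℝ → ℝⁿ be such that every entry of A, λ, and every component of w has a derivative at t₀, and A(t) w(t) = λ(t) w(t) for all t in a neighborhood of t₀. Let v ∈ ℝⁿ satisfy vᵀ A(t₀) = λ(t₀) vᵀ and v·w(t₀) ≠ 0. Then λ'(t₀) = (vᵀ A'(t₀) w(t₀)) / (v·w(t₀)). -/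
/-!
Pair the eigen-equation `A t *ᵥ w t = λ t • w t` with the left eigenvector `v` and differentiate
`v ⬝ᵥ (A t *ᵥ w t) = λ t * (v ⬝ᵥ w t)` at `t₀` by the product rule. The terms involving `w'(t₀)`
are `v ⬝ᵥ (A t₀ *ᵥ w') = (v ᵥ* A t₀) ⬝ᵥ w' = λ t₀ * (v ⬝ᵥ w')` on both sides and cancel, leaving
`λ'(t₀) * (v ⬝ᵥ w t₀) = v ⬝ᵥ (A'(t₀) *ᵥ w t₀)`.
-/

open Matrix Filter Topology

section

variable {𝕜 : Type*} [NontriviallyNormedField 𝕜] {m n : Type*} [Fintype n] {t₀ : 𝕜}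

theorem hasDerivAt_dotProduct {x y : 𝕜 → n → 𝕜} {x' y' : n → 𝕜}
    (hx : ∀ i, HasDerivAt (fun t => x t i) (x' i) t₀)
    (hy : ∀ i, HasDerivAt (fun t => y t i) (y' i) t₀) :
    HasDerivAt (fun t => x t ⬝ᵥ y t) (x' ⬝ᵥ y t₀ + x t₀ ⬝ᵥ y') t₀ := by
  have h := HasDerivAt.fun_sum (u := Finset.univ) fun i _ => (hx i).mul (hy i)
  rwa [Finset.sum_add_distrib] at h

theorem hasDerivAt_const_dotProduct (v : n → 𝕜) {y : 𝕜 → n → 𝕜} {y' : n → 𝕜}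
    (hy : ∀ i, HasDerivAt (fun t => y t i) (y' i) t₀) :
    HasDerivAt (fun t => v ⬝ᵥ y t) (v ⬝ᵥ y') t₀ := by
  simpa using hasDerivAt_dotProduct (x := fun _ => v) (fun _ => hasDerivAt_const t₀ _) hy

theorem hasDerivAt_mulVec_apply {A : 𝕜 → Matrix m n 𝕜} {A' : Matrix m n 𝕜}
    {y : 𝕜 → n → 𝕜} {y' : n → 𝕜}
    (hA : ∀ i j, HasDerivAt (fun t => A t i j) (A' i j) t₀)
    (hy : ∀ j, HasDerivAt (fun t => y t j) (y' j) t₀) (i : m) :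
    HasDerivAt (fun t => (A t *ᵥ y t) i) ((A' *ᵥ y t₀ + A t₀ *ᵥ y') i) t₀ :=
  hasDerivAt_dotProduct (hA i) hy

theorem deriv_eigenvalue_mul_dotProduct_eq {A : 𝕜 → Matrix n n 𝕜} {A' : Matrix n n 𝕜}
    {lam : 𝕜 → 𝕜} {lam' : 𝕜} {w : 𝕜 → n → 𝕜} {w' : n → 𝕜} {v : n → 𝕜}
    (hA : ∀ i j, HasDerivAt (fun t => A t i j) (A' i j) t₀)
    (hlam : HasDerivAt lam lam' t₀)
    (hw : ∀ i, HasDerivAt (fun t => w t i) (w' i) t₀)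
    (heig : ∀ᶠ t in 𝓝 t₀, A t *ᵥ w t = lam t • w t)
    (hv : v ᵥ* A t₀ = lam t₀ • v) :
    lam' * (v ⬝ᵥ w t₀) = v ⬝ᵥ (A' *ᵥ w t₀) := by
  have hleft : HasDerivAt (fun t => lam t * (v ⬝ᵥ w t))
      (v ⬝ᵥ (A' *ᵥ w t₀ + A t₀ *ᵥ w')) t₀ := by
    refine (hasDerivAt_const_dotProduct v (hasDerivAt_mulVec_apply hA hw)).congr_of_eventuallyEq ?_
    filter_upwards [heig] with t ht
    rw [ht, dotProduct_smul, smul_eq_mul]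
  have hright : HasDerivAt (fun t => lam t * (v ⬝ᵥ w t))
      (lam' * (v ⬝ᵥ w t₀) + lam t₀ * (v ⬝ᵥ w')) t₀ :=
    hlam.mul (hasDerivAt_const_dotProduct v hw)
  have h := hright.unique hleft
  rw [dotProduct_add, dotProduct_mulVec v (A t₀), hv, smul_dotProduct, smul_eq_mul] at h
  linear_combination h

end

/-- Perturbation formula for a simple eigenvalue: if `A t ⬝ w t = λ t • w t` near `t₀`,
all entries of `A`, `λ` and `w` are differentiable at `t₀`, `v` is a left eigenvector
of `A t₀` for `λ t₀` with `v · w t₀ ≠ 0`, then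
`λ'(t₀) = (vᵀ A'(t₀) w(t₀)) / (v · w(t₀))`. -/
theorem stmt_10 (n : ℕ)
    (A : ℝ → Matrix (Fin n) (Fin n) ℝ) (lam : ℝ → ℝ) (w : ℝ → Fin n → ℝ)
    (t₀ : ℝ)
    (A' : Matrix (Fin n) (Fin n) ℝ)
    (hA : ∀ i j, HasDerivAt (fun t => A t i j) (A' i j) t₀)
    (lam' : ℝ) (hlam : HasDerivAt lam lam' t₀)
    (w' : Fin n → ℝ)
    (hw : ∀ i, HasDerivAt (fun t => w t i) (w' i) t₀)
    (heig : ∀ᶠ t in nhds t₀, ∀ i, ∑ j, A t i j * w t j = lam t * w t i)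
    (v : Fin n → ℝ)
    (hv : ∀ j, ∑ i, v i * A t₀ i j = lam t₀ * v j)
    (hvw : ∑ j, v j * w t₀ j ≠ 0) :
    lam' = (∑ i, ∑ j, v i * A' i j * w t₀ j) / (∑ j, v j * w t₀ j) := by
  have key := deriv_eigenvalue_mul_dotProduct_eq hA hlam hw (heig.mono fun _ ht => funext ht)
    (v := v) (funext hv)
  have hsum : v ⬝ᵥ (A' *ᵥ w t₀) = ∑ i, ∑ j, v i * A' i j * w t₀ j := by
    simp only [dotProduct, mulVec, Finset.mul_sum, mul_assoc]
  rw [eq_div_iff hvw, ← hsum]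
  exact key
end

section
/- For the Leslie matrix L with eigenvalue λ, right eigenvector w_i = l_i λ^{−(i−1)} and left eigenvector v_i = (λ^{i−1}/l_i) ∑_{j=i}^{ω} l_j f_j λ^{−j}, the sum of the elasticities of the first-row (fertility) entries equals the reciprocal of the generation time: ∑_{j=1}^{ω} (L_{1j}/λ) · v_1 w_j / (v·w) = 1 / ∑_{i=1}^{ω} i l_i f_i λ^{−i}. Equivalently, the stationary probability of the newborn stage, π_1 = v_1 w_1/(v·w), equals 1/T where T = ∑_i i l_i f_i λ^{−i}. -/
/-!
The right eigenvector is normalised so that `w₁ = 1`, and the Euler–Lotka equation gives `v₁ = 1`.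
Each product `vᵢ wᵢ` is the tail sum `∑_{j > i} lⱼ fⱼ λ^{-j}`, and summing these tails counts the
`j`-th term exactly `j` times, so `v·w` is the generation time `T`. Hence `π₁ = 1/T`; likewise the
fertility elasticities add up to `(∑ⱼ lⱼ fⱼ λ^{-j}) / T = 1/T`.
-/

open Finset

theorem Finset.sum_range_sum_Icc_add_one {M : Type*} [AddCommMonoid M] (g : ℕ → M) (n : ℕ) :
    ∑ i ∈ range n, ∑ j ∈ Icc (i + 1) n, g j = ∑ j ∈ Icc 1 n, j • g j := by
  rw [sum_comm' (t' := Icc 1 n) (s' := range)]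
  · simp
  · intro i j
    simp only [mem_range, mem_Icc]
    omega

theorem Fin.sum_univ_add_one_eq_sum_Icc {M : Type*} [AddCommMonoid M] (g : ℕ → M) (n : ℕ) :
    ∑ i : Fin n, g (i + 1) = ∑ j ∈ Icc 1 n, g j := by
  rw [Fin.sum_univ_eq_sum_range (fun i => g (i + 1)), range_eq_Ico, sum_Ico_add' g 0 n 1,
    zero_add, Ico_add_one_right_eq_Icc]

theorem survivorship_pos {ω : ℕ} {s l : ℕ → ℝ} (hs : ∀ i, 1 ≤ i → i ≤ ω - 1 → 0 < s i)
    (hl1 : l 1 = 1) (hl : ∀ i, 2 ≤ i → l i = ∏ k ∈ Icc 1 (i - 1), s k) {i : ℕ} (hi₁ : 1 ≤ i)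
    (hiω : i ≤ ω) : 0 < l i := by
  obtain rfl | hi₂ : i = 1 ∨ 2 ≤ i := by omega
  · simp [hl1]
  · rw [hl i hi₂]
    refine prod_pos fun k hk => ?_
    rw [mem_Icc] at hk
    exact hs k hk.1 (by omega)

theorem stmt_16_general (ω : ℕ) (hω : 1 ≤ ω)
    (s : ℕ → ℝ) (hs : ∀ i, 1 ≤ i → i ≤ ω - 1 → 0 < s i)
    (f : ℕ → ℝ)
    (L : Matrix (Fin ω) (Fin ω) ℝ)
    (hL : ∀ i j : Fin ω, L i j =
      if (i : ℕ) = 0 then f ((j : ℕ) + 1)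
      else if (i : ℕ) = (j : ℕ) + 1 then s ((j : ℕ) + 1) else 0)
    (l : ℕ → ℝ) (hl1 : l 1 = 1)
    (hl : ∀ i, 2 ≤ i → l i = ∏ k ∈ Finset.Icc 1 (i - 1), s k)
    (lam : ℝ) (hlam : 0 < lam)
    (heuler : ∑ i ∈ Finset.Icc 1 ω, l i * f i / lam ^ i = 1)
    (w : Fin ω → ℝ)
    (hw : ∀ i : Fin ω, w i = l ((i : ℕ) + 1) / lam ^ (i : ℕ))
    (v : Fin ω → ℝ)
    (hv : ∀ i : Fin ω, v i =
      lam ^ (i : ℕ) / l ((i : ℕ) + 1) *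
        ∑ j ∈ Finset.Icc ((i : ℕ) + 1) ω, l j * f j / lam ^ j) :
    (∑ j, (L ⟨0, hω⟩ j / lam) * (v ⟨0, hω⟩ * w j / (∑ i, v i * w i)) =
        1 / ∑ i ∈ Finset.Icc 1 ω, (i : ℝ) * l i * f i / lam ^ i) ∧
      v ⟨0, hω⟩ * w ⟨0, hω⟩ / (∑ i, v i * w i) =
        1 / ∑ i ∈ Finset.Icc 1 ω, (i : ℝ) * l i * f i / lam ^ i := by
  have hv₀ : v ⟨0, hω⟩ = 1 := by simp [hv, hl1, heuler]
  have hw₀ : w ⟨0, hω⟩ = 1 := by simp [hw, hl1]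
  have hvw (i : Fin ω) : v i * w i = ∑ j ∈ Icc ((i : ℕ) + 1) ω, l j * f j / lam ^ j := by
    have : l ((i : ℕ) + 1) ≠ 0 := (survivorship_pos hs hl1 hl (by omega) i.isLt).ne'
    rw [hv, hw]
    field_simp
  have hdot : ∑ i, v i * w i = ∑ i ∈ Icc 1 ω, (i : ℝ) * l i * f i / lam ^ i := by
    simp_rw [hvw, Fin.sum_univ_eq_sum_range (fun i => ∑ j ∈ Icc (i + 1) ω, l j * f j / lam ^ j),
      sum_range_sum_Icc_add_one, nsmul_eq_mul, mul_div_assoc, mul_assoc]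
  have hfert (j : Fin ω) :
      L ⟨0, hω⟩ j / lam * w j = l ((j : ℕ) + 1) * f ((j : ℕ) + 1) / lam ^ ((j : ℕ) + 1) := by
    rw [hL, hw, if_pos rfl, pow_succ]
    field_simp
  refine ⟨?_, by rw [hv₀, hw₀, hdot, mul_one]⟩
  simp_rw [hv₀, one_mul, mul_div_assoc', hfert, ← sum_div, hdot,
    Fin.sum_univ_add_one_eq_sum_Icc (fun j => l j * f j / lam ^ j), heuler]

/-- For the Leslie matrix, the sum of the elasticities of the first-row (fertility)
entries equals the reciprocal of the generation time `T = ∑ i, i l_i f_i λ^{-i}`;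
equivalently, the stationary probability of the newborn stage, `π₁ = v₁ w₁/(v·w)`,
equals `1/T`. -/
theorem stmt_16 (ω : ℕ) (hω : 1 ≤ ω)
    (s : ℕ → ℝ) (hs : ∀ i, 1 ≤ i → i ≤ ω - 1 → 0 < s i)
    (f : ℕ → ℝ) (hf : ∀ i, 1 ≤ i → i ≤ ω → 0 ≤ f i)
    (L : Matrix (Fin ω) (Fin ω) ℝ)
    (hL : ∀ i j : Fin ω, L i j =
      if (i : ℕ) = 0 then f ((j : ℕ) + 1)
      else if (i : ℕ) = (j : ℕ) + 1 then s ((j : ℕ) + 1) else 0)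
    (l : ℕ → ℝ) (hl1 : l 1 = 1)
    (hl : ∀ i, 2 ≤ i → l i = ∏ k ∈ Finset.Icc 1 (i - 1), s k)
    (lam : ℝ) (hlam : 0 < lam)
    (heuler : ∑ i ∈ Finset.Icc 1 ω, l i * f i / lam ^ i = 1)
    (hT : 0 < ∑ i ∈ Finset.Icc 1 ω, (i : ℝ) * l i * f i / lam ^ i)
    (w : Fin ω → ℝ)
    (hw : ∀ i : Fin ω, w i = l ((i : ℕ) + 1) / lam ^ (i : ℕ))
    (v : Fin ω → ℝ)
    (hv : ∀ i : Fin ω, v i =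
      lam ^ (i : ℕ) / l ((i : ℕ) + 1) *
        ∑ j ∈ Finset.Icc ((i : ℕ) + 1) ω, l j * f j / lam ^ j) :
    (∑ j, (L ⟨0, hω⟩ j / lam) * (v ⟨0, hω⟩ * w j / (∑ i, v i * w i)) =
        1 / ∑ i ∈ Finset.Icc 1 ω, (i : ℝ) * l i * f i / lam ^ i) ∧
      v ⟨0, hω⟩ * w ⟨0, hω⟩ / (∑ i, v i * w i) =
        1 / ∑ i ∈ Finset.Icc 1 ω, (i : ℝ) * l i * f i / lam ^ i :=
  stmt_16_general ω hω s hs f L hL l hl1 hl lam hlam heuler w hw v hv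
end

section
/- The numbers P(1) = ϖ_R Q_{RR} 𝟙 and P(k) = ϖ_R Q_{RS} (Q_{SS})^{k−2} Q_{SR} 𝟙 for k ≥ 2 form a probability distribution on the positive integers: P(k) ≥ 0 for all k and ∑_{k=1}^{∞} P(k) = 1. -/
/-!
Put `u k = ϖ_R Q_RS Q_SSᵏ 𝟙`, the mass that has not yet re-entered `R` after `k + 1` steps.
Since `Q_SR 𝟙 = 𝟙 - Q_SS 𝟙`, we get `P (k + 2) = u k - u (k + 1)`, and `Q_RR 𝟙 + Q_RS 𝟙 = 𝟙`
gives `P 1 + u 0 = 1`, so the series telescopes to `1` once `u k → 0`. For that, `Q_SS` is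
substochastic and, by irreducibility, every state of `S` leaks mass into `R` within finitely many
steps; hence some power `Q_SS^M` has all row sums `≤ c < 1`, and `Q_SSᵏ 𝟙` decays geometrically.
Irreducibility also makes `π` strictly positive, so `ϖ_R` is a probability vector.
-/

open Finset Matrix Filter Topology

lemma Antitone.hasSum_sub_succ {u : ℕ → ℝ} {l : ℝ} (hu : Antitone u)
    (hl : Tendsto u atTop (𝓝 l)) : HasSum (fun k => u k - u (k + 1)) (u 0 - l) := by
  refine (hasSum_iff_tendsto_nat_of_nonneg (fun k => sub_nonneg.2 (hu k.le_succ)) _).2 ?_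
  simp_rw [sum_range_sub']
  exact tendsto_const_nhds.sub hl

namespace Matrix

lemma vecMul_pow_eq_self {α n : Type*} [Fintype n] [DecidableEq n] [Semiring α]
    {Q : Matrix n n α} {v : n → α} (hv : v ᵥ* Q = v) (k : ℕ) : v ᵥ* Q ^ k = v := by
  induction k with
  | zero => rw [pow_zero, vecMul_one]
  | succ k ih => rw [pow_succ, ← vecMul_vecMul, ih, hv]

section Nonneg

variable {α m n : Type*} [Fintype n] [Semiring α] [PartialOrder α] [IsOrderedRing α]
  {A : Matrix m n α}

lemma mulVec_le_mulVec_of_nonneg (hA : ∀ i j, 0 ≤ A i j) {v w : n → α} (hvw : v ≤ w) :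
    A *ᵥ v ≤ A *ᵥ w :=
  fun i => dotProduct_le_dotProduct_of_nonneg_left hvw (hA i)

lemma mulVec_nonneg (hA : ∀ i j, 0 ≤ A i j) {v : n → α} (hv : 0 ≤ v) : 0 ≤ A *ᵥ v := by
  simpa using mulVec_le_mulVec_of_nonneg hA hv

end Nonneg

section Substochastic

variable {n : Type*} [Fintype n] [DecidableEq n] {A : Matrix n n ℝ}

lemma antitone_pow_mulVec_one (hA : ∀ i j, 0 ≤ A i j) (hA1 : A *ᵥ 1 ≤ 1) :
    Antitone fun k => A ^ k *ᵥ 1 :=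
  antitone_nat_of_succ_le fun k => by
    rw [pow_succ, ← mulVec_mulVec]
    exact mulVec_le_mulVec_of_nonneg (pow_apply_nonneg hA k) hA1

lemma pow_mul_mulVec_one_le (hA : ∀ i j, 0 ≤ A i j) {M : ℕ} {c : ℝ} (hc : 0 ≤ c)
    (hM : A ^ M *ᵥ 1 ≤ c • 1) (k : ℕ) : A ^ (k * M) *ᵥ 1 ≤ c ^ k • 1 := by
  induction k with
  | zero => simp
  | succ k ih =>
    calc A ^ ((k + 1) * M) *ᵥ 1 = A ^ M *ᵥ A ^ (k * M) *ᵥ 1 := by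
          rw [mulVec_mulVec, ← pow_add, add_mul, one_mul, add_comm]
      _ ≤ A ^ M *ᵥ (c ^ k • 1) := mulVec_le_mulVec_of_nonneg (pow_apply_nonneg hA M) ih
      _ = c ^ k • A ^ M *ᵥ 1 := mulVec_smul _ _ _
      _ ≤ c ^ k • c • 1 := smul_le_smul_of_nonneg_left hM (pow_nonneg hc k)
      _ = c ^ (k + 1) • 1 := by rw [smul_smul, pow_succ]

lemma exists_pow_mulVec_one_le_smul (hA : ∀ i j, 0 ≤ A i j) (hA1 : A *ᵥ 1 ≤ 1)
    (hleak : ∀ i, ∃ k, (A ^ k *ᵥ 1) i < 1) :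
    ∃ M ≠ 0, ∃ c : ℝ, 0 ≤ c ∧ c < 1 ∧ A ^ M *ᵥ 1 ≤ c • 1 := by
  obtain ⟨M, hM0, hM⟩ : ∃ M ≠ 0, ∀ i, (A ^ M *ᵥ 1) i < 1 := by
    refine ((eventually_ne_atTop 0).and (eventually_all.2 fun i => ?_)).exists
    obtain ⟨k, hk⟩ := hleak i
    exact eventually_atTop.2
      ⟨k, fun l hl => (antitone_pow_mulVec_one hA hA1 hl i).trans_lt hk⟩
  -- any `c` close enough to `1` from below dominates the finitely many entries `< 1`
  obtain ⟨c, hc0, hc1, hc⟩ : ∃ c : ℝ, 0 < c ∧ c < 1 ∧ ∀ i, (A ^ M *ᵥ 1) i < c := by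
    have hnear : ∀ᶠ c in 𝓝 (1 : ℝ), 0 < c ∧ ∀ i, (A ^ M *ᵥ 1) i < c :=
      (eventually_gt_nhds one_pos).and (eventually_all.2 fun i => eventually_gt_nhds (hM i))
    obtain ⟨c, ⟨hc0, hc⟩, hc1⟩ :=
      ((eventually_nhdsWithin_of_eventually_nhds hnear).and
        (eventually_mem_nhdsWithin (s := Set.Iio 1))).exists
    exact ⟨c, hc0, hc1, hc⟩
  exact ⟨M, hM0, c, hc0.le, hc1, fun i => by simpa using (hc i).le⟩

theorem tendsto_pow_mulVec_one_nhds_zero (hA : ∀ i j, 0 ≤ A i j) (hA1 : A *ᵥ 1 ≤ 1)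
    (hleak : ∀ i, ∃ k, (A ^ k *ᵥ 1) i < 1) :
    Tendsto (fun k => A ^ k *ᵥ 1) atTop (𝓝 0) := by
  obtain ⟨M, hM0, c, hc0, hc1, hMc⟩ := exists_pow_mulVec_one_le_smul hA hA1 hleak
  have hgeom : Tendsto (fun k => c ^ (k / M)) atTop (𝓝 0) :=
    (tendsto_pow_atTop_nhds_zero_of_lt_one hc0 hc1).comp (Nat.tendsto_div_const_atTop hM0)
  refine tendsto_pi_nhds.2 fun i => squeeze_zero
    (fun k => mulVec_nonneg (pow_apply_nonneg hA k) zero_le_one i) (fun k => ?_) hgeom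
  calc (A ^ k *ᵥ 1) i ≤ (A ^ (k / M * M) *ᵥ 1) i :=
        antitone_pow_mulVec_one hA hA1 (Nat.div_mul_le_self k M) i
    _ ≤ c ^ (k / M) := by simpa using pow_mul_mulVec_one_le hA hc0 hMc (k / M) i

end Substochastic

section Block

lemma toBlock_mulVec_one_add_toBlock_not {α m n : Type*} [Fintype n] [Semiring α]
    (M : Matrix m n α) (p : m → Prop) (q : n → Prop) [DecidablePred q] :
    M.toBlock p q *ᵥ 1 + M.toBlock p (fun j => ¬ q j) *ᵥ 1 =
      fun i : {a // p a} => (M *ᵥ 1) i := by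
  ext i
  exact Fintype.sum_subtype_add_sum_subtype q fun j => M i j * 1

variable {α n : Type*} [Fintype n] [DecidableEq n] [CommRing α] [PartialOrder α]
  [IsOrderedRing α] {Q : Matrix n n α}

lemma toBlock_pow_apply_le (hQ : ∀ i j, 0 ≤ Q i j) (p : n → Prop) [DecidablePred p] (k : ℕ)
    (i j : {a // p a}) : (Q.toBlock p p ^ k) i j ≤ (Q ^ k).toBlock p p i j := by
  induction k generalizing j with
  | zero => rw [pow_zero, pow_zero, toBlock_one_self]
  | succ k ih =>
    rw [pow_succ, pow_succ, toBlock_mul_eq_add p p, add_apply, mul_apply, mul_apply]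
    refine le_add_of_le_of_nonneg (sum_le_sum fun l _ => ?_) (sum_nonneg fun l _ => ?_)
    · exact mul_le_mul_of_nonneg_right (ih l) (hQ _ _)
    · exact mul_nonneg (pow_apply_nonneg hQ k _ _) (hQ _ _)

end Block

section Stochastic

variable {n : Type*} [Fintype n] [DecidableEq n] {Q : Matrix n n ℝ}

lemma toBlock_mulVec_one_add_toBlock_not_of_mem_rowStochastic (hQ : Q ∈ rowStochastic ℝ n)
    (p q : n → Prop) [DecidablePred q] :
    Q.toBlock p q *ᵥ 1 + Q.toBlock p (fun j => ¬ q j) *ᵥ 1 = 1 := by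
  rw [toBlock_mulVec_one_add_toBlock_not, one_vecMul_of_mem_rowStochastic hQ]
  rfl

lemma toBlock_not_mulVec_one_le_one (hQ : Q ∈ rowStochastic ℝ n) (p q : n → Prop)
    [DecidablePred q] : Q.toBlock p (fun j => ¬ q j) *ᵥ 1 ≤ 1 :=
  (le_add_of_nonneg_left (mulVec_nonneg (fun _ _ => nonneg_of_mem_rowStochastic hQ)
    zero_le_one)).trans_eq (toBlock_mulVec_one_add_toBlock_not_of_mem_rowStochastic hQ p q)

lemma exists_toBlock_pow_mulVec_one_lt_one (hQ : Q ∈ rowStochastic ℝ n) (p : n → Prop)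
    [DecidablePred p] {r : n} (hr : ¬ p r) (hreach : ∀ i, ∃ k, 0 < (Q ^ k) i r)
    (i : {a // p a}) : ∃ k, (Q.toBlock p p ^ k *ᵥ 1) i < 1 := by
  obtain ⟨k, hk⟩ := hreach i
  refine ⟨k, ?_⟩
  have hQk : Q ^ k ∈ rowStochastic ℝ n := pow_mem hQ k
  have hsplit := congrFun (toBlock_mulVec_one_add_toBlock_not_of_mem_rowStochastic hQk p p) i
  have hstay : (Q.toBlock p p ^ k *ᵥ 1) i ≤ ((Q ^ k).toBlock p p *ᵥ 1) i :=
    sum_le_sum fun j _ => mul_le_mul_of_nonneg_right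
      (toBlock_pow_apply_le (fun _ _ => nonneg_of_mem_rowStochastic hQ) p k i j) zero_le_one
  have hleave : (Q ^ k) i r * 1 ≤ ((Q ^ k).toBlock p (fun j => ¬ p j) *ᵥ 1) i :=
    single_le_sum (f := fun j : {j // ¬ p j} => (Q ^ k) i j * 1)
      (fun j _ => mul_nonneg (nonneg_of_mem_rowStochastic hQk) zero_le_one) (mem_univ ⟨r, hr⟩)
  simp only [Pi.add_apply, Pi.one_apply] at hsplit
  linarith

lemma pos_of_vecMul_eq_self (hQ : ∀ i j, 0 ≤ Q i j) (hirr : ∀ i j, ∃ k, 0 < (Q ^ k) i j)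
    {v : n → ℝ} (hv : 0 ≤ v) (hv0 : v ≠ 0) (hvQ : v ᵥ* Q = v) (j : n) : 0 < v j := by
  obtain ⟨i, hi⟩ : ∃ i, 0 < v i := by
    by_contra! h
    exact hv0 (funext fun i => le_antisymm (h i) (hv i))
  obtain ⟨k, hk⟩ := hirr i j
  rw [← vecMul_pow_eq_self hvQ k]
  exact (mul_pos hi hk).trans_le (single_le_sum (f := fun l => v l * (Q ^ k) l j)
    (fun l _ => mul_nonneg (hv l) (pow_apply_nonneg hQ k l j)) (mem_univ i))

end Stochastic

section Telescoping

variable {R S : Type*} [Fintype R] [Fintype S] [DecidableEq S] {w : R → ℝ}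
  {B : Matrix R S ℝ} {C : Matrix S R ℝ} {D : Matrix S S ℝ}

lemma dotProduct_mul_pow_mul_mulVec_one (hCD : C *ᵥ 1 + D *ᵥ 1 = 1) (k : ℕ) :
    w ⬝ᵥ (B * D ^ k * C) *ᵥ 1 = w ⬝ᵥ B *ᵥ D ^ k *ᵥ 1 - w ⬝ᵥ B *ᵥ D ^ (k + 1) *ᵥ 1 := by
  rw [← mulVec_mulVec, ← mulVec_mulVec, eq_sub_of_add_eq hCD, mulVec_sub, mulVec_sub,
    dotProduct_sub, pow_succ, ← mulVec_mulVec _ (D ^ k) D]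

lemma antitone_dotProduct_mulVec_pow_mulVec_one (hw : 0 ≤ w) (hB : ∀ i j, 0 ≤ B i j)
    (hD : ∀ i j, 0 ≤ D i j) (hD1 : D *ᵥ 1 ≤ 1) :
    Antitone fun k => w ⬝ᵥ B *ᵥ D ^ k *ᵥ 1 := fun _ _ hkl =>
  dotProduct_le_dotProduct_of_nonneg_left
    (mulVec_le_mulVec_of_nonneg hB (antitone_pow_mulVec_one hD hD1 hkl)) hw

lemma hasSum_dotProduct_mul_pow_mul_mulVec_one (hw : 0 ≤ w) (hB : ∀ i j, 0 ≤ B i j)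
    (hD : ∀ i j, 0 ≤ D i j) (hD1 : D *ᵥ 1 ≤ 1) (hCD : C *ᵥ 1 + D *ᵥ 1 = 1)
    (hDlim : Tendsto (fun k => D ^ k *ᵥ 1) atTop (𝓝 0)) :
    HasSum (fun k => w ⬝ᵥ (B * D ^ k * C) *ᵥ 1) (w ⬝ᵥ B *ᵥ 1) := by
  have hcont : Continuous fun x : S → ℝ => w ⬝ᵥ B *ᵥ x :=
    continuous_const.dotProduct (continuous_const.matrix_mulVec continuous_id)
  have hlim := (hcont.tendsto 0).comp hDlim
  rw [mulVec_zero, dotProduct_zero] at hlim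
  have hsum := (antitone_dotProduct_mulVec_pow_mulVec_one hw hB hD hD1).hasSum_sub_succ hlim
  rw [pow_zero, one_mulVec, sub_zero] at hsum
  exact hsum.congr_fun (dotProduct_mul_pow_mul_mulVec_one hCD)

end Telescoping

section FirstReturn

/-- For a chain with transition matrix `Q` started in `{i | p i}` with law `w`, the probability
that its first return to `{i | p i}` happens at time `k`. -/
def firstReturnProb {n : Type*} [Fintype n] [DecidableEq n] (Q : Matrix n n ℝ) (p : n → Prop)
    [DecidablePred p] (w : {i // p i} → ℝ) : ℕ → ℝ
  | 0 => 0
  | 1 => w ⬝ᵥ Q.toBlock p p *ᵥ 1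
  | k + 2 => w ⬝ᵥ (Q.toBlock p (fun i => ¬ p i) *
      Q.toBlock (fun i => ¬ p i) (fun i => ¬ p i) ^ k * Q.toBlock (fun i => ¬ p i) p) *ᵥ 1

variable {n : Type*} [Fintype n] [DecidableEq n] {Q : Matrix n n ℝ} {p : n → Prop}
  [DecidablePred p] {w : {i // p i} → ℝ}

lemma firstReturnProb_nonneg (hQ : Q ∈ rowStochastic ℝ n) (hw : 0 ≤ w) :
    ∀ k, 0 ≤ firstReturnProb Q p w k
  | 0 => le_rfl
  | 1 => by
    rw [firstReturnProb]
    exact dotProduct_nonneg_of_nonneg hw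
      (mulVec_nonneg (fun _ _ => nonneg_of_mem_rowStochastic hQ) zero_le_one)
  | k + 2 => by
    rw [firstReturnProb, dotProduct_mul_pow_mul_mulVec_one
      (toBlock_mulVec_one_add_toBlock_not_of_mem_rowStochastic hQ _ p), sub_nonneg]
    exact antitone_dotProduct_mulVec_pow_mulVec_one hw
      (fun _ _ => nonneg_of_mem_rowStochastic hQ) (fun _ _ => nonneg_of_mem_rowStochastic hQ)
      (toBlock_not_mulVec_one_le_one hQ _ p) k.le_succ

theorem hasSum_firstReturnProb (hQ : Q ∈ rowStochastic ℝ n) {r : n} (hr : p r)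
    (hreach : ∀ i, ∃ k, 0 < (Q ^ k) i r) (hw : 0 ≤ w) (hw1 : w ⬝ᵥ 1 = 1) :
    HasSum (fun k => firstReturnProb Q p w (k + 1)) 1 := by
  have hQnn (i j : n) : 0 ≤ Q i j := nonneg_of_mem_rowStochastic hQ
  have hSS1 := toBlock_not_mulVec_one_le_one hQ (fun i => ¬ p i) p
  have hlim := tendsto_pow_mulVec_one_nhds_zero (fun _ _ => hQnn _ _) hSS1
    (exists_toBlock_pow_mulVec_one_lt_one hQ _ (not_not_intro hr) hreach)
  have htail : HasSum (fun k => firstReturnProb Q p w (k + 2))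
      (w ⬝ᵥ Q.toBlock p (fun i => ¬ p i) *ᵥ 1) :=
    hasSum_dotProduct_mul_pow_mul_mulVec_one hw (fun _ _ => hQnn _ _) (fun _ _ => hQnn _ _)
      hSS1 (toBlock_mulVec_one_add_toBlock_not_of_mem_rowStochastic hQ _ p) hlim
  convert htail.zero_add (f := fun k => firstReturnProb Q p w (k + 1)) using 1
  rw [← hw1, ← toBlock_mulVec_one_add_toBlock_not_of_mem_rowStochastic hQ p p, dotProduct_add]
  rfl

end FirstReturn

end Matrix

theorem stmt_17_general {ι : Type*} [Fintype ι] [DecidableEq ι]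
    (rp : ι → Prop) [DecidablePred rp]
    (hR : Nonempty {i // rp i})
    (Q : Matrix ι ι ℝ)
    (hQnn : ∀ i j, 0 ≤ Q i j) (hQrow : ∀ i, ∑ j, Q i j = 1)
    (hirr : ∀ i j, ∃ m : ℕ, 1 ≤ m ∧ 0 < (Q ^ m) i j)
    (π : ι → ℝ) (hπnn : ∀ i, 0 ≤ π i) (hπsum : ∑ i, π i = 1)
    (hπstat : ∀ j, ∑ i, π i * Q i j = π j)
    (QRR : Matrix {i // rp i} {i // rp i} ℝ)
    (hQRR : ∀ a b, QRR a b = Q a.val b.val)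
    (QRS : Matrix {i // rp i} {i // ¬ rp i} ℝ)
    (hQRS : ∀ a b, QRS a b = Q a.val b.val)
    (QSR : Matrix {i // ¬ rp i} {i // rp i} ℝ)
    (hQSR : ∀ a b, QSR a b = Q a.val b.val)
    (QSS : Matrix {i // ¬ rp i} {i // ¬ rp i} ℝ)
    (hQSS : ∀ a b, QSS a b = Q a.val b.val)
    (ϖ : {i // rp i} → ℝ)
    (hϖ : ∀ b, ϖ b = π b.val / ∑ b' : {i // rp i}, π b'.val)
    (P : ℕ → ℝ)
    (hP1 : P 1 = ∑ b, Matrix.vecMul ϖ QRR b)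
    (hPk : ∀ k, 2 ≤ k → P k = ∑ b, Matrix.vecMul ϖ (QRS * QSS ^ (k - 2) * QSR) b) :
    (∀ k, 1 ≤ k → 0 ≤ P k) ∧ HasSum (fun k : ℕ => P (k + 1)) 1 := by
  obtain rfl : QRR = Q.toBlock rp rp := Matrix.ext hQRR
  obtain rfl : QRS = Q.toBlock rp (fun i => ¬ rp i) := Matrix.ext hQRS
  obtain rfl : QSR = Q.toBlock (fun i => ¬ rp i) rp := Matrix.ext hQSR
  obtain rfl : QSS = Q.toBlock (fun i => ¬ rp i) (fun i => ¬ rp i) := Matrix.ext hQSS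
  have hP : ∀ k, 1 ≤ k → P k = firstReturnProb Q rp ϖ k
    | 0, h => absurd h (by norm_num)
    | 1, _ => by rw [hP1, firstReturnProb, dotProduct_mulVec, dotProduct_one]
    | k + 2, _ => by
      rw [hPk (k + 2) (by omega), Nat.add_sub_cancel, firstReturnProb, dotProduct_mulVec,
        dotProduct_one]
  obtain ⟨r⟩ := hR
  have hQ : Q ∈ rowStochastic ℝ ι := mem_rowStochastic_iff_sum.2 ⟨hQnn, hQrow⟩
  have hreach (i j : ι) : ∃ k, 0 < (Q ^ k) i j := (hirr i j).imp fun _ => And.right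
  have hπpos := pos_of_vecMul_eq_self hQnn hreach hπnn
    (fun h => by simp [h] at hπsum) (funext hπstat)
  have hϖnn : 0 ≤ ϖ := fun b => by
    rw [hϖ]; exact div_nonneg (hπnn b) (sum_nonneg fun b' _ => hπnn b')
  have hϖ1 : ϖ ⬝ᵥ 1 = 1 := by
    simp only [dotProduct_one, hϖ, ← sum_div]
    exact div_self (sum_pos (fun (b : {i // rp i}) _ => hπpos b) (univ_nonempty_iff.2 ⟨r⟩)).ne'
  refine ⟨fun k hk => hP k hk ▸ firstReturnProb_nonneg hQ hϖnn k, ?_⟩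
  exact (hasSum_firstReturnProb hQ r.2 (hreach · r) hϖnn hϖ1).congr_fun fun k =>
    hP (k + 1) k.succ_pos

/-- For a finite irreducible Markov chain `Q` with stationary distribution `π` and a
partition of the states into nonempty sets `R` and `S`, the numbers
`P 1 = ϖ_R Q_RR 𝟙` and `P k = ϖ_R Q_RS (Q_SS)^(k-2) Q_SR 𝟙` for `k ≥ 2` form a
probability distribution on the positive integers. -/
theorem stmt_17 {ι : Type*} [Fintype ι] [DecidableEq ι]
    (rp : ι → Prop) [DecidablePred rp]
    (hR : Nonempty {i // rp i}) (hS : Nonempty {i // ¬ rp i})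
    (Q : Matrix ι ι ℝ)
    (hQnn : ∀ i j, 0 ≤ Q i j) (hQrow : ∀ i, ∑ j, Q i j = 1)
    (hirr : ∀ i j, ∃ m : ℕ, 1 ≤ m ∧ 0 < (Q ^ m) i j)
    (π : ι → ℝ) (hπnn : ∀ i, 0 ≤ π i) (hπsum : ∑ i, π i = 1)
    (hπstat : ∀ j, ∑ i, π i * Q i j = π j)
    (QRR : Matrix {i // rp i} {i // rp i} ℝ)
    (hQRR : ∀ a b, QRR a b = Q a.val b.val)
    (QRS : Matrix {i // rp i} {i // ¬ rp i} ℝ)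
    (hQRS : ∀ a b, QRS a b = Q a.val b.val)
    (QSR : Matrix {i // ¬ rp i} {i // rp i} ℝ)
    (hQSR : ∀ a b, QSR a b = Q a.val b.val)
    (QSS : Matrix {i // ¬ rp i} {i // ¬ rp i} ℝ)
    (hQSS : ∀ a b, QSS a b = Q a.val b.val)
    (ϖ : {i // rp i} → ℝ)
    (hϖ : ∀ b, ϖ b = π b.val / ∑ b' : {i // rp i}, π b'.val)
    (P : ℕ → ℝ)
    (hP1 : P 1 = ∑ b, Matrix.vecMul ϖ QRR b)
    (hPk : ∀ k, 2 ≤ k → P k = ∑ b, Matrix.vecMul ϖ (QRS * QSS ^ (k - 2) * QSR) b) :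
    (∀ k, 1 ≤ k → 0 ≤ P k) ∧ HasSum (fun k : ℕ => P (k + 1)) 1 :=
  stmt_17_general rp hR Q hQnn hQrow hirr π hπnn hπsum hπstat QRR hQRR QRS hQRS QSR hQSR QSS hQSS ϖ
    hϖ P hP1 hPk
end
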